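/- Let X and Λ be independent real random variables such that |X| ≤ B almost surely and Λ is uniformly distributed on [−γ, γ] with γ ≥ B. Then E[γ · sign(X + Λ)] = E[X]. -/

import Mathlib

open MeasureTheory ProbabilityTheory
open scoped ENNReal

noncomputable section

/-- `sgn x = 1` if `x ≥ 0`, and `-1` otherwise. -/
def sgn (x : ℝ) : ℝ := if 0 ≤ x then 1 else -1

/-- Truncation at level `η`: `x ↦ sign(x) · min {|x|, η}`. -/
def trunc (η x : ℝ) : ℝ := sgn x * min |x| η

/-- The law of the uniform distribution on the interval `[-γ, γ]`. -/
def unifLaw (γ : ℝ) : Measure ℝ :=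
  (ENNReal.ofReal (2 * γ))⁻¹ • (volume.restrict (Set.Icc (-γ) γ))

/-- The law of the uniform distribution on the cube `[-γ, γ]^d`. -/
def unifCubeLaw (d : ℕ) (γ : ℝ) : Measure (Fin d → ℝ) :=
  Measure.pi fun _ : Fin d => unifLaw γ

/-- The sub-Gaussian (ψ₂) norm of a real random variable. -/
def subgNorm {Ω : Type*} [MeasurableSpace Ω] (μ : Measure Ω) (X : Ω → ℝ) : ℝ :=
  sInf {t : ℝ | 0 < t ∧ ∫ ω, Real.exp (X ω ^ 2 / t ^ 2) ∂μ ≤ 2}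

/-- The sub-Gaussian (ψ₂) norm of a random vector: `sup_{‖V‖₂ = 1} ‖VᵀX‖_{ψ₂}`. -/
def subgNormVec {Ω : Type*} [MeasurableSpace Ω] {d : ℕ} (μ : Measure Ω)
    (X : Ω → Fin d → ℝ) : ℝ :=
  sSup {a : ℝ | ∃ V : Fin d → ℝ, ∑ i, V i ^ 2 = 1 ∧
    a = subgNorm μ fun ω => ∑ i, V i * X ω i}

/-- The Euclidean (ℓ₂) norm on `Fin d → ℝ`. -/
def l2Norm {d : ℕ} (v : Fin d → ℝ) : ℝ := Real.sqrt (∑ i, v i ^ 2)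

/-- The ℓ₁ norm on `Fin d → ℝ`. -/
def l1Norm {d : ℕ} (v : Fin d → ℝ) : ℝ := ∑ i, |v i|

/-- The Frobenius norm of a `d × d` matrix. -/
def frobNorm {d : ℕ} (A : Fin d → Fin d → ℝ) : ℝ := Real.sqrt (∑ i, ∑ j, A i j ^ 2)

/-- The entrywise maximum norm of a `d × d` matrix. -/
def maxNorm {d : ℕ} (A : Fin d → Fin d → ℝ) : ℝ := ⨆ i, ⨆ j, |A i j|

/-- The ℓ₂ → ℓ₂ operator (spectral) norm of a `d × d` matrix. -/
def opNorm {d : ℕ} (A : Fin d → Fin d → ℝ) : ℝ :=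
  sSup {a : ℝ | ∃ v : Fin d → ℝ, ∑ i, v i ^ 2 = 1 ∧
    a = Real.sqrt (∑ i, (∑ j, A i j * v j) ^ 2)}

/-- The singular values of a `d × d` real matrix (in some enumeration):
the square roots of the eigenvalues of `AᵀA`. -/
def singVals {d : ℕ} (A : Fin d → Fin d → ℝ) : Fin d → ℝ := fun i =>
  Real.sqrt ((show (Matrix.transpose (Matrix.of A) * Matrix.of A).IsHermitian by
    simpa using Matrix.isHermitian_conjTranspose_mul_self (Matrix.of A)).eigenvalues i)

/-- The nuclear norm: the sum of the singular values. -/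
def nucNorm {d : ℕ} (A : Fin d → Fin d → ℝ) : ℝ := ∑ i, singVals A i

/-- `|x| ^ q`, with the convention that it is `0` when `x = 0`
(so that `q = 0` counts nonzero entries). -/
def powAbs (q x : ℝ) : ℝ := if x = 0 then 0 else |x| ^ q

/-- Column-wise vectorization of a `d × d` matrix (indexed by pairs). -/
def vecM {d : ℕ} (A : Fin d → Fin d → ℝ) : Fin d × Fin d → ℝ := fun p => A p.1 p.2

/-- The standard basis matrix `eᵢ eⱼᵀ`. -/
def basisM {d : ℕ} (i j : Fin d) : Fin d → Fin d → ℝ := fun a b =>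
  if a = i ∧ b = j then 1 else 0

/-- The law of the uniform distribution on `{eᵢ eⱼᵀ : i, j ∈ [d]}`. -/
def mcLaw (d : ℕ) : Measure (Fin d → Fin d → ℝ) :=
  ((d : ℝ≥0∞) ^ 2)⁻¹ • ∑ i : Fin d, ∑ j : Fin d, Measure.dirac (basisM i j)

/-- The trace inner product `⟨A, B⟩ = Tr(AᵀB) = Σᵢⱼ Aᵢⱼ Bᵢⱼ`. -/
def minner {d : ℕ} (A B : Fin d → Fin d → ℝ) : ℝ := ∑ i, ∑ j, A i j * B i j

/-!
Conditionally on `X = x` with `|x| ≤ γ`, the sign of `x + Λ` is `+1` exactly on the part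
`[-x, γ]` of `[-γ, γ]`, which has probability `(γ + x) / (2γ)`, so `E[γ · sign(x + Λ)] = x`.
Independence lets us integrate first over `Λ` and then over `X`.
-/

lemma measurable_sgn : Measurable sgn :=
  Measurable.ite (measurableSet_le measurable_const measurable_id) measurable_const measurable_const

lemma abs_sgn (x : ℝ) : |sgn x| = 1 := by
  unfold sgn; split <;> simp

lemma sgn_add_eq_two_mul_indicator_sub_one (x l : ℝ) :
    sgn (x + l) = 2 * (Set.Ici (-x)).indicator 1 l - 1 := by
  by_cases h : -x ≤ l
  · norm_num [sgn, h, show 0 ≤ x + l by linarith]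
  · simp [sgn, h, show ¬ 0 ≤ x + l by linarith]

lemma setIntegral_sgn_add_Icc {γ x : ℝ} (hx : |x| ≤ γ) :
    ∫ l in Set.Icc (-γ) γ, sgn (x + l) = 2 * x := by
  obtain ⟨hxl, hxu⟩ := abs_le.mp hx
  have hint : Integrable ((Set.Ici (-x)).indicator (1 : ℝ → ℝ))
      (volume.restrict (Set.Icc (-γ) γ)) :=
    (integrable_const (1 : ℝ)).indicator measurableSet_Ici
  have hinter : Set.Ici (-x) ∩ Set.Icc (-γ) γ = Set.Icc (-x) γ := by
    ext l
    simp only [Set.mem_inter_iff, Set.mem_Ici, Set.mem_Icc]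
    exact ⟨fun ⟨h, _, h'⟩ => ⟨h, h'⟩, fun ⟨h, h'⟩ => ⟨h, by linarith, h'⟩⟩
  simp_rw [sgn_add_eq_two_mul_indicator_sub_one x]
  rw [integral_sub (hint.const_mul 2) (integrable_const 1), integral_const_mul,
    integral_indicator_one measurableSet_Ici, measureReal_restrict_apply measurableSet_Ici,
    hinter]
  simp only [integral_const, measureReal_restrict_apply_univ, smul_eq_mul, mul_one,
    Real.volume_real_Icc_of_le (by linarith : -x ≤ γ),
    Real.volume_real_Icc_of_le (by linarith : -γ ≤ γ)]
  ring

lemma integral_mul_sgn_add_unifLaw {γ x : ℝ} (hγ : 0 < γ) (hx : |x| ≤ γ) :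
    ∫ l, γ * sgn (x + l) ∂unifLaw γ = x := by
  rw [unifLaw, integral_smul_measure, integral_const_mul, setIntegral_sgn_add_Icc hx,
    ENNReal.toReal_inv, ENNReal.toReal_ofReal (by positivity), smul_eq_mul]
  field_simp

theorem ProbabilityTheory.IndepFun.integral_comp_eq_integral_integral
    {Ω α β E : Type*} [MeasurableSpace Ω] [MeasurableSpace α] [MeasurableSpace β]
    [NormedAddCommGroup E] [NormedSpace ℝ E] {μ : Measure Ω} [IsFiniteMeasure μ]
    {X : Ω → α} {Y : Ω → β} (hXY : IndepFun X Y μ) (hX : AEMeasurable X μ)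
    (hY : AEMeasurable Y μ) {f : α × β → E} (hf : Integrable f ((μ.map X).prod (μ.map Y))) :
    ∫ ω, f (X ω, Y ω) ∂μ = ∫ x, ∫ y, f (x, y) ∂μ.map Y ∂μ.map X := by
  have hmap := hXY.map_prod_eq_prod_map_map hX hY
  rw [← integral_prod f hf, ← hmap,
    integral_map (hX.prodMk hY) (hmap ▸ hf.aestronglyMeasurable)]

theorem statement_0
    {Ω : Type*} [MeasurableSpace Ω] (μ : Measure Ω) [IsProbabilityMeasure μ]
    (X Λ : Ω → ℝ) (B γ : ℝ)
    (hX : Measurable X) (hΛ : Measurable Λ)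
    (hindep : IndepFun X Λ μ)
    (hbound : ∀ᵐ ω ∂μ, |X ω| ≤ B)
    (hγpos : 0 < γ) (hBγ : B ≤ γ)
    (hlaw : Measure.map Λ μ = unifLaw γ) :
    ∫ ω, γ * sgn (X ω + Λ ω) ∂μ = ∫ ω, X ω ∂μ := by
  have := Measure.isProbabilityMeasure_map (μ := μ) hX.aemeasurable
  have := Measure.isProbabilityMeasure_map (μ := μ) hΛ.aemeasurable
  have hf : Integrable (fun p : ℝ × ℝ => γ * sgn (p.1 + p.2)) ((μ.map X).prod (μ.map Λ)) :=
    .of_bound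
      ((measurable_sgn.comp (measurable_fst.add measurable_snd)).const_mul γ).aestronglyMeasurable
      |γ| (.of_forall fun p => by rw [Real.norm_eq_abs, abs_mul, abs_sgn, mul_one])
  have hXγ : ∀ᵐ x ∂μ.map X, |x| ≤ γ :=
    (ae_map_iff hX.aemeasurable (measurableSet_le measurable_abs measurable_const)).mpr
      (hbound.mono fun ω h => h.trans hBγ)
  calc ∫ ω, γ * sgn (X ω + Λ ω) ∂μ
      = ∫ x, ∫ l, γ * sgn (x + l) ∂unifLaw γ ∂μ.map X := by
        rw [← hlaw]
        exact hindep.integral_comp_eq_integral_integral hX.aemeasurable hΛ.aemeasurable hf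
    _ = ∫ x, x ∂μ.map X :=
        integral_congr_ae (hXγ.mono fun x hx => integral_mul_sgn_add_unifLaw hγpos hx)
    _ = ∫ ω, X ω ∂μ := integral_map hX.aemeasurable aestronglyMeasurable_id
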